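/- arXiv:2010.03981 — 2 statements merged into one kernel-verified Lean document; each statement's English description precedes it below -/
import Mathlib

section
/- Let T = CP(n; n_1, …, n_k) ∈ C(n,k) be a caterpillar tree with respect to the path P_k = v_1⋯v_k, where 2 ≤ k ≤ n − 1. Then T ⪰ CP_{n,k}^{⌈k/2⌉}, and r(T) = r(CP_{n,k}^{⌈k/2⌉}) if and only if T is isomorphic to CP_{n,k}^{⌈k/2⌉}. -/
namespace TreeOrder

attribute [local instance] Classical.propDecidable

variable {V : Type*} {W : Type*}

/-- `side G u v` = number of vertices strictly closer to `u` than to `v`;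
for an edge `uv` of a tree this is the order of the component of `T - uv` containing `u`. -/
noncomputable def side [Fintype V] (G : SimpleGraph V) (u v : V) : ℕ :=
  (Finset.univ.filter fun w => G.dist w u < G.dist w v).card

/-- `mu G u v = min (n_u(e), n_v(e))` for the edge `e = uv`. -/
noncomputable def mu [Fintype V] (G : SimpleGraph V) (u v : V) : ℕ :=
  min (side G u v) (side G v u)

/-- `mu` as a function on unordered pairs. -/
noncomputable def muE [Fintype V] (G : SimpleGraph V) : Sym2 V → ℕ :=
  Sym2.lift ⟨fun u v => mu G u v, fun _ _ => min_comm _ _⟩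

/-- `r G i` = number of edges `e` of `G` with `μ(e) = i`. -/
noncomputable def r [Fintype V] (G : SimpleGraph V) (i : ℕ) : ℕ :=
  (Finset.univ.filter fun e : Sym2 V => e ∈ G.edgeSet ∧ muE G e = i).card

/-- `tailSum G n k = Σ_{i=k}^{⌊n/2⌋} r_i(G)`. -/
noncomputable def tailSum [Fintype V] (G : SimpleGraph V) (n k : ℕ) : ℕ :=
  ∑ i ∈ Finset.Icc k (n / 2), r G i

/-- The order `⪯` on trees with `n` vertices, via edge division vectors. -/
def Preceq [Fintype V] [Fintype W] (n : ℕ) (G : SimpleGraph V) (H : SimpleGraph W) : Prop :=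
  ∀ k, 1 ≤ k → k ≤ n / 2 → tailSum G n k ≤ tailSum H n k

/-- The strict order `≺`. -/
def Prec [Fintype V] [Fintype W] (n : ℕ) (G : SimpleGraph V) (H : SimpleGraph W) : Prop :=
  Preceq n G H ∧ ∃ k, 1 ≤ k ∧ k ≤ n / 2 ∧ tailSum G n k < tailSum H n k

/-- Equality of edge division vectors `r(G) = r(H)`. -/
def SameEdgeDivision [Fintype V] [Fintype W] (n : ℕ) (G : SimpleGraph V)
    (H : SimpleGraph W) : Prop :=
  ∀ i, 1 ≤ i → i ≤ n / 2 → r G i = r H i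

/-- `u` is a centroidal vertex: `n_u(e) ≥ n/2` for every edge `e` incident to `u`. -/
def IsCentroidal [Fintype V] (G : SimpleGraph V) (u : V) : Prop :=
  ∀ v, G.Adj u v → Fintype.card V ≤ 2 * side G u v

/-- `u` is a proper centroidal vertex: `n_u(e) > ⌈n/2⌉` for every edge `e` incident to `u`. -/
def IsProperCentroidal [Fintype V] (G : SimpleGraph V) (u : V) : Prop :=
  ∀ v, G.Adj u v → (Fintype.card V + 1) / 2 < side G u v

/-- The edge `uv` is a center edge: `μ(uv) = ⌊n/2⌋`. -/
def IsCenterEdge [Fintype V] (G : SimpleGraph V) (u v : V) : Prop :=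
  G.Adj u v ∧ mu G u v = Fintype.card V / 2

/-- degree of a vertex -/
noncomputable def deg [Fintype V] (G : SimpleGraph V) (v : V) : ℕ :=
  (Finset.univ.filter fun w => G.Adj v w).card

/-- The path `P_n` on `n` vertices. -/
def pathG (n : ℕ) : SimpleGraph (Fin n) :=
  SimpleGraph.fromRel fun x y => (x : ℕ) + 1 = y

/-- The star `S_n` on `n` vertices. -/
def starG (n : ℕ) : SimpleGraph (Fin n) :=
  SimpleGraph.fromRel fun x _ => (x : ℕ) = 0

/-- The double star path `CP_{n;a,b}` : a path on `n - a - b` vertices (at positions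
`a, …, n - b - 1`) with `a` pendent vertices attached to its first vertex and `b`
pendent vertices attached to its last vertex. -/
def doubleStar (n a b : ℕ) : SimpleGraph (Fin n) :=
  SimpleGraph.fromRel fun x y =>
    ((x : ℕ) < a ∧ (y : ℕ) = a) ∨
    (a ≤ (x : ℕ) ∧ (x : ℕ) + 1 = y ∧ (y : ℕ) < n - b) ∨
    ((x : ℕ) = n - b - 1 ∧ n - b ≤ (y : ℕ))

/-- `CP_{n,k}^s` : a path `v_1 ⋯ v_k` (at positions `0, …, k-1`) with all
`n - k` pendent vertices attached to `v_s` (position `s - 1`). -/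
def cpOne (n k s : ℕ) : SimpleGraph (Fin n) :=
  SimpleGraph.fromRel fun x y =>
    ((x : ℕ) + 1 = y ∧ (y : ℕ) < k) ∨ ((x : ℕ) = s - 1 ∧ k ≤ (y : ℕ))

/-- The caterpillar `CP(n; n_1, …, n_k)` : a path `v_1 ⋯ v_k` (at positions `0, …, k-1`),
where pendent vertex `j` (for `k ≤ j < n`) is attached to the path vertex at
position `f j` (so `n_i = |{j : f j = i - 1}|`). -/
def caterpillar (n k : ℕ) (f : ℕ → ℕ) : SimpleGraph (Fin n) :=
  SimpleGraph.fromRel fun x y =>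
    ((x : ℕ) + 1 = y ∧ (y : ℕ) < k) ∨ (k ≤ (y : ℕ) ∧ (x : ℕ) = f y)

/-- The balanced starlike tree `SP_{n,q}` : the center is vertex `0`, and vertex
`j ≥ 1` lies on branch `(j - 1) % q` at depth `(j - 1)/q + 1`; so the `q` branches are
paths whose orders pairwise differ by at most `1`. -/
def balancedStar (n q : ℕ) : SimpleGraph (Fin n) :=
  SimpleGraph.fromRel fun x y =>
    ((x : ℕ) = 0 ∧ 1 ≤ (y : ℕ) ∧ (y : ℕ) ≤ q) ∨ (1 ≤ (x : ℕ) ∧ (x : ℕ) + q = y)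

/-- The edge-moving transformation of `G` w.r.t. the edge `uv`: contract `uv` to `u`
(moving all edges at `v` to `u`) and attach `v` to `u` as a pendent vertex. -/
def edgeMove (G : SimpleGraph V) (u v : V) : SimpleGraph V :=
  SimpleGraph.fromRel fun x y =>
    (G.Adj x y ∧ x ≠ v ∧ y ≠ v) ∨ (x = u ∧ y = v) ∨ (x = u ∧ G.Adj v y ∧ y ≠ u)

/-! Root the caterpillar at `v_1`. The edge from a vertex to its parent is the only edge leaving
the parent's side, so its `μ` is a count: a spine edge `v_t v_{t+1}` has
`μ = min (t + p_t) (n - t - p_t)`, where `p_t` is the number of pendent vertices attached to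
`v_1, …, v_t`, and a pendent edge has `μ = 1`. As `0 ≤ p_t ≤ n - k`, every spine edge has
`μ ≥ min t (k - t)`, which is its value in `CP_{n,k}^{⌈k/2⌉}`; this edgewise domination
gives `⪰`. If the edge division vectors agree then so do the sums `∑ μ(e) = ∑ i r_i`, so the
domination is an equality edge by edge. That forces `p_t = 0` for `2t < k` and `p_t = n - k`
for `2t > k`: all pendent vertices hang at `v_{⌈k/2⌉}` or, for even `k`, all at `v_{k/2+1}`,
the mirror image. -/

open Finset

def OnlyEdgeLeaving (G : SimpleGraph V) (S : Set V) (u v : V) : Prop :=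
  ∀ x y, G.Adj x y → x ∈ S → y ∉ S → x = u ∧ y = v

section OnlyEdgeLeaving

variable {G : SimpleGraph V} {S : Set V} {u v : V}

theorem OnlyEdgeLeaving.compl (h : OnlyEdgeLeaving G S u v) : OnlyEdgeLeaving G Sᶜ v u :=
  fun x y hxy hx hy => (h y x hxy.symm (not_not.1 hy) hx).symm

theorem OnlyEdgeLeaving.exists_shorter_walk (h : OnlyEdgeLeaving G S u v) {w z : V}
    (p : G.Walk w z) (hw : w ∈ S) (hz : z ∉ S) : ∃ q : G.Walk w u, q.length < p.length := by
  induction p with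
  | nil => exact absurd hw hz
  | @cons a b c hab p ih =>
    by_cases hb : b ∈ S
    · obtain ⟨q, hq⟩ := ih hb hz
      exact ⟨.cons hab q, by simpa using hq⟩
    · obtain ⟨rfl, -⟩ := h a b hab hw hb
      exact ⟨.nil, by simp⟩

theorem OnlyEdgeLeaving.dist_lt (h : OnlyEdgeLeaving G S u v) (hG : G.Preconnected) {w z : V}
    (hw : w ∈ S) (hz : z ∉ S) : G.dist w u < G.dist w z := by
  obtain ⟨p, hp⟩ := (hG w z).exists_walk_length_eq_dist
  obtain ⟨q, hq⟩ := h.exists_shorter_walk p hw hz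
  exact (SimpleGraph.dist_le q).trans_lt (hp ▸ hq)

theorem OnlyEdgeLeaving.side_eq [Fintype V] {S : Finset V} (h : OnlyEdgeLeaving G S u v)
    (hG : G.Preconnected) (hu : u ∈ S) (hv : v ∉ S) : side G u v = S.card := by
  unfold side
  congr 1
  ext w
  simp only [mem_filter, mem_univ, true_and]
  refine ⟨fun hlt => by_contra fun hw => ?_, fun hw => h.dist_lt hG hw hv⟩
  have := h.compl.dist_lt hG (w := w) (z := u) hw (not_not.2 hu)
  omega

theorem OnlyEdgeLeaving.mu_eq [Fintype V] {S : Finset V} (h : OnlyEdgeLeaving G S u v)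
    (hG : G.Preconnected) (hu : u ∈ S) (hv : v ∉ S) :
    mu G u v = min S.card (Fintype.card V - S.card) := by
  have hc : OnlyEdgeLeaving G ↑Sᶜ v u := by rw [coe_compl]; exact h.compl
  rw [mu, h.side_eq hG hu hv, hc.side_eq hG (by simpa) (by simpa), card_compl]

end OnlyEdgeLeaving

theorem mu_comm [Fintype V] (G : SimpleGraph V) (u v : V) : mu G u v = mu G v u :=
  min_comm _ _

section Iso

variable {G : SimpleGraph V} {H : SimpleGraph W}

theorem dist_map_le_of_reachable (φ : G →g H) {u v : V} (h : G.Reachable u v) :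
    H.dist (φ u) (φ v) ≤ G.dist u v := by
  obtain ⟨p, hp⟩ := h.exists_walk_length_eq_dist
  exact (SimpleGraph.dist_le (p.map φ)).trans (by rw [SimpleGraph.Walk.length_map, hp])

theorem dist_eq_of_iso (φ : G ≃g H) (u v : V) : H.dist (φ u) (φ v) = G.dist u v := by
  by_cases h : G.Reachable u v
  · refine le_antisymm (dist_map_le_of_reachable φ.toHom h) ?_
    have h' : H.Reachable (φ u) (φ v) := SimpleGraph.Iso.reachable_iff.2 h
    simpa using dist_map_le_of_reachable φ.symm.toHom h'
  · rw [SimpleGraph.dist_eq_zero_of_not_reachable h,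
      SimpleGraph.dist_eq_zero_of_not_reachable (mt SimpleGraph.Iso.reachable_iff.1 h)]

variable [Fintype V] [Fintype W]

theorem side_eq_of_iso (φ : G ≃g H) (u v : V) : side H (φ u) (φ v) = side G u v := by
  refine card_equiv φ.symm.toEquiv fun w => ?_
  simp [← dist_eq_of_iso φ.symm w]

theorem muE_map_of_iso (φ : G ≃g H) (e : Sym2 V) : muE H (e.map φ) = muE G e := by
  induction e with
  | _ u v => simp only [muE, Sym2.map_mk, Sym2.lift_mk, mu, side_eq_of_iso]

theorem r_eq_of_iso (φ : G ≃g H) (i : ℕ) : r G i = r H i := by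
  refine card_nbij' (Sym2.map φ) (Sym2.map φ.symm) ?_ ?_ ?_ ?_
  all_goals intro e; simp [Sym2.map_map, muE_map_of_iso, SimpleGraph.Iso.map_mem_edgeSet_iff]

end Iso

section Caterpillar

variable {n k : ℕ} {f : ℕ → ℕ}

def AttachesToSpine (n k : ℕ) (f : ℕ → ℕ) : Prop :=
  ∀ j, k ≤ j → j < n → f j < k

/-- Rooting the caterpillar at `v_1` (position `0`), `x` is the parent of `y`. -/
def IsParent (k : ℕ) (f : ℕ → ℕ) (x y : ℕ) : Prop :=
  (x + 1 = y ∧ y < k) ∨ (k ≤ y ∧ x = f y)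

def spinePos (k : ℕ) (f : ℕ → ℕ) (x : ℕ) : ℕ :=
  if x < k then x else f x

def pendantsBelow (n k : ℕ) (f : ℕ → ℕ) (t : ℕ) : ℕ :=
  #{j ∈ Ico k n | f j < t}

/-- `μ` of the edge joining `y ≥ 1` to its parent: a spine edge `v_y v_{y+1}` splits off
`v_1, …, v_y` together with their pendent vertices. -/
def muAbove (n k : ℕ) (f : ℕ → ℕ) (y : ℕ) : ℕ :=
  if y < k then min (y + pendantsBelow n k f y) (n - (y + pendantsBelow n k f y)) else 1

theorem IsParent.lt (hf : AttachesToSpine n k f) {x y : ℕ} (h : IsParent k f x y) (hy : y < n) :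
    x < y := by
  rcases h with h | ⟨hky, rfl⟩
  · omega
  · have := hf y hky hy; omega

theorem caterpillar_adj_iff (hf : AttachesToSpine n k f) {x y : Fin n} :
    (caterpillar n k f).Adj x y ↔ IsParent k f x y ∨ IsParent k f y x := by
  rw [caterpillar, SimpleGraph.fromRel_adj]
  refine ⟨And.right, fun h => ⟨?_, h⟩⟩
  rintro rfl
  rcases h with h | h <;> exact lt_irrefl _ (h.lt hf x.isLt)

theorem exists_isParent (hf : AttachesToSpine n k f) (y : Fin n) (hy : 0 < (y : ℕ)) :
    ∃ x : Fin n, IsParent k f x y := by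
  by_cases hyk : (y : ℕ) < k
  · exact ⟨⟨y - 1, by omega⟩, Or.inl ⟨by simp only; omega, hyk⟩⟩
  · have := hf y (by omega) y.isLt
    exact ⟨⟨f y, by omega⟩, Or.inr ⟨by omega, rfl⟩⟩

theorem caterpillar_preconnected (hf : AttachesToSpine n k f) :
    (caterpillar n k f).Preconnected := by
  have reach_root : ∀ y : Fin n, (caterpillar n k f).Reachable y ⟨0, y.pos⟩ := by
    intro y
    induction y using WellFoundedLT.induction with
    | _ y ih =>
      rcases Nat.eq_zero_or_pos y with hy | hy
      · exact (Fin.ext hy : y = ⟨0, y.pos⟩) ▸ .rfl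
      obtain ⟨x, hx⟩ := exists_isParent hf y hy
      have hadj : (caterpillar n k f).Adj y x := (caterpillar_adj_iff hf).2 (Or.inr hx)
      exact hadj.reachable.trans (ih x (hx.lt hf y.isLt))
  exact fun u v => (reach_root u).trans (reach_root v).symm

theorem onlyEdgeLeaving_spine (hf : AttachesToSpine n k f) {x y : Fin n}
    (hxy : (x : ℕ) + 1 = y) (hy : (y : ℕ) < k) :
    OnlyEdgeLeaving (caterpillar n k f) ↑({w | spinePos k f w < y} : Finset (Fin n)) x y := by
  intro a b hab ha hb
  simp only [mem_coe, mem_filter, mem_univ, true_and] at ha hb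
  unfold spinePos at ha hb
  have hfa := hf a
  have hfb := hf b
  rw [caterpillar_adj_iff hf, IsParent, IsParent] at hab
  refine ⟨Fin.ext ?_, Fin.ext ?_⟩ <;> split_ifs at ha hb <;> omega

theorem card_filter_fin_val (p : ℕ → Prop) [DecidablePred p] :
    #{w : Fin n | p w} = #{x ∈ Iio n | p x} := by
  rw [← Fin.map_valEmbedding_univ, filter_map, card_map]
  rfl

theorem card_spinePos_lt {t : ℕ} (htk : t ≤ k) (htn : t ≤ n) :
    #{w : Fin n | spinePos k f w < t} = t + pendantsBelow n k f t := by
  have hsplit : {x ∈ Iio n | spinePos k f x < t} = Iio t ∪ {j ∈ Ico k n | f j < t} := by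
    ext x
    simp only [mem_filter, mem_Iio, mem_union, mem_Ico]
    unfold spinePos
    split_ifs <;> omega
  have hdisj : Disjoint (Iio t) {j ∈ Ico k n | f j < t} := by
    rw [disjoint_left]
    intro x hx hx'
    simp only [mem_Iio, mem_filter, mem_Ico] at hx hx'
    omega
  rw [card_filter_fin_val fun x => spinePos k f x < t, hsplit, card_union_of_disjoint hdisj,
    Nat.card_Iio, pendantsBelow]

theorem mu_spine (hf : AttachesToSpine n k f) {x y : Fin n} (hxy : (x : ℕ) + 1 = y)
    (hy : (y : ℕ) < k) :
    mu (caterpillar n k f) x y =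
      min (y + pendantsBelow n k f y) (n - (y + pendantsBelow n k f y)) := by
  have hx : spinePos k f x = x := if_pos (by omega)
  have hy' : spinePos k f y = y := if_pos hy
  rw [(onlyEdgeLeaving_spine hf hxy hy).mu_eq (caterpillar_preconnected hf)
    (by simp [hx]; omega) (by simp [hy']), card_spinePos_lt hy.le y.isLt.le, Fintype.card_fin]

theorem onlyEdgeLeaving_pendant (hf : AttachesToSpine n k f) {x y : Fin n} (hy : k ≤ (y : ℕ))
    (hx : (x : ℕ) = f y) : OnlyEdgeLeaving (caterpillar n k f) ↑({y} : Finset (Fin n)) y x := by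
  intro a b hab ha hb
  simp only [coe_singleton, Set.mem_singleton_iff] at ha hb
  subst ha
  have := hf a hy a.isLt
  have := (hf b · b.isLt)
  rw [caterpillar_adj_iff hf, IsParent, IsParent] at hab
  refine ⟨rfl, Fin.ext ?_⟩
  have : (a : ℕ) ≠ b := fun h => hb (Fin.ext h).symm
  omega

theorem mu_pendant (hf : AttachesToSpine n k f) {x y : Fin n} (hy : k ≤ (y : ℕ))
    (hx : (x : ℕ) = f y) : mu (caterpillar n k f) x y = 1 := by
  have := hf y hy y.isLt
  have hxy : y ≠ x := fun h => by rw [h] at hy; omega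
  rw [mu_comm, (onlyEdgeLeaving_pendant hf hy hx).mu_eq (caterpillar_preconnected hf)
    (mem_singleton_self y) (by simpa using hxy.symm), card_singleton, Fintype.card_fin]
  omega

theorem mu_of_isParent (hf : AttachesToSpine n k f) {x y : Fin n} (h : IsParent k f x y) :
    mu (caterpillar n k f) x y = muAbove n k f y := by
  rcases h with ⟨hxy, hy⟩ | ⟨hy, hx⟩
  · rw [mu_spine hf hxy hy, muAbove, if_pos hy]
  · rw [mu_pendant hf hy hx, muAbove, if_neg (by omega)]

theorem exists_isParent_of_mem_edgeSet (hf : AttachesToSpine n k f) {e : Sym2 (Fin n)}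
    (he : e ∈ (caterpillar n k f).edgeSet) :
    ∃ x y : Fin n, IsParent k f x y ∧ e = s(x, y) := by
  induction e with
  | _ a b =>
    rcases (caterpillar_adj_iff hf).1 he with h | h
    · exact ⟨a, b, h, rfl⟩
    · exact ⟨b, a, h, Sym2.eq_swap⟩

theorem sup_of_isParent (hf : AttachesToSpine n k f) {x y : Fin n} (h : IsParent k f x y) :
    s(x, y).sup = y :=
  sup_of_le_right (h.lt hf y.isLt).le

theorem IsParent.unique (hf : AttachesToSpine n k f) {x x' y : Fin n} (h : IsParent k f x y)
    (h' : IsParent k f x' y) : x = x' := by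
  have := hf y
  unfold IsParent at h h'
  exact Fin.ext (by omega)

theorem r_caterpillar (hf : AttachesToSpine n k f) (m : ℕ) :
    r (caterpillar n k f) m = #{y ∈ Ico 1 n | muAbove n k f y = m} := by
  refine card_nbij (fun e => (e.sup : ℕ)) ?_ ?_ ?_
  · intro e he
    simp only [coe_filter, mem_univ, true_and, Set.mem_ofPred_eq] at he ⊢
    obtain ⟨x, y, hxy, rfl⟩ := exists_isParent_of_mem_edgeSet hf he.1
    have := hxy.lt hf y.isLt
    rw [sup_of_isParent hf hxy, ← mu_of_isParent hf hxy]
    exact ⟨mem_Ico.2 ⟨by omega, y.isLt⟩, he.2⟩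
  · intro e he e' he'
    simp only [coe_filter, mem_univ, true_and, Set.mem_ofPred_eq] at he he'
    obtain ⟨x, y, hxy, rfl⟩ := exists_isParent_of_mem_edgeSet hf he.1
    obtain ⟨x', y', hxy', rfl⟩ := exists_isParent_of_mem_edgeSet hf he'.1
    intro hsup
    simp only [sup_of_isParent hf hxy, sup_of_isParent hf hxy'] at hsup
    obtain rfl := Fin.ext hsup
    rw [hxy.unique hf hxy']
  · intro y hy
    simp only [coe_filter, mem_Ico, Set.mem_ofPred_eq] at hy
    obtain ⟨⟨hy1, hyn⟩, hmy⟩ := hy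
    obtain ⟨x, hx⟩ := exists_isParent hf ⟨y, hyn⟩ hy1
    refine ⟨s(x, ⟨y, hyn⟩), ?_, by simp [sup_of_isParent hf hx]⟩
    simp only [coe_filter, mem_univ, true_and, Set.mem_ofPred_eq, SimpleGraph.mem_edgeSet]
    exact ⟨(caterpillar_adj_iff hf).2 (Or.inl hx), (mu_of_isParent hf hx).trans hmy⟩

theorem pendantsBelow_le (t : ℕ) : pendantsBelow n k f t ≤ n - k :=
  (card_filter_le _ _).trans (Nat.card_Ico k n).le

theorem muAbove_mem_Icc {y : ℕ} (hy : y ∈ Ico 1 n) : muAbove n k f y ∈ Icc 1 (n / 2) := by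
  have := pendantsBelow_le (n := n) (k := k) (f := f) y
  rw [mem_Ico] at hy
  rw [mem_Icc, muAbove]
  split_ifs <;> omega

theorem tailSum_caterpillar (hf : AttachesToSpine n k f) (m : ℕ) :
    tailSum (caterpillar n k f) n m = #{y ∈ Ico 1 n | muAbove n k f y ∈ Icc m (n / 2)} := by
  simp only [tailSum, r_caterpillar hf]
  exact sum_card_fiberwise_eq_card_filter _ _ _

theorem sum_mul_r_caterpillar (hf : AttachesToSpine n k f) :
    ∑ i ∈ Icc 1 (n / 2), i * r (caterpillar n k f) i = ∑ y ∈ Ico 1 n, muAbove n k f y := by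
  rw [← sum_fiberwise_of_maps_to fun y hy => muAbove_mem_Icc (f := f) hy]
  refine sum_congr rfl fun i _ => ?_
  rw [r_caterpillar hf, sum_const_nat fun y hy => (mem_filter.1 hy).2, mul_comm]

def centered (k : ℕ) : ℕ → ℕ :=
  fun _ => (k + 1) / 2 - 1

theorem AttachesToSpine.centered (hf : AttachesToSpine n k f) :
    AttachesToSpine n k (centered k) := fun j hj hjn => by
  have := hf j hj hjn
  show (k + 1) / 2 - 1 < k
  omega

theorem cpOne_eq_caterpillar (n k : ℕ) :
    cpOne n k ((k + 1) / 2) = caterpillar n k (centered k) := by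
  unfold cpOne caterpillar
  congr 1
  funext x y
  exact propext (or_congr_right and_comm)

theorem caterpillar_congr {g : ℕ → ℕ} (h : ∀ j, k ≤ j → j < n → f j = g j) :
    caterpillar n k f = caterpillar n k g := by
  unfold caterpillar
  congr 1
  funext x y
  refine propext (or_congr_right (and_congr_right fun hy => ?_))
  rw [h y hy y.isLt]

theorem pendantsBelow_centered (t : ℕ) :
    pendantsBelow n k (centered k) t = if (k + 1) / 2 - 1 < t then n - k else 0 := by
  unfold pendantsBelow centered
  split_ifs with h
  · rw [filter_true_of_mem fun _ _ => h, Nat.card_Ico]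
  · rw [filter_false_of_mem fun _ _ => h, card_empty]

theorem muAbove_centered_le {y : ℕ} (hy : y ∈ Ico 1 n) :
    muAbove n k (centered k) y ≤ muAbove n k f y := by
  have := pendantsBelow_le (n := n) (k := k) (f := f) y
  rw [mem_Ico] at hy
  simp only [muAbove, pendantsBelow_centered]
  split_ifs <;> omega

theorem tailSum_centered_le (hf : AttachesToSpine n k f) (m : ℕ) :
    tailSum (caterpillar n k (centered k)) n m ≤ tailSum (caterpillar n k f) n m := by
  rw [tailSum_caterpillar hf.centered, tailSum_caterpillar hf]
  refine card_le_card fun y => ?_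
  simp only [mem_filter, mem_Icc]
  exact fun ⟨hy, hm, _⟩ =>
    ⟨hy, hm.trans (muAbove_centered_le hy), (mem_Icc.1 (muAbove_mem_Icc hy)).2⟩

theorem muAbove_centered_eq_of_sameEdgeDivision (hf : AttachesToSpine n k f)
    (hr : SameEdgeDivision n (caterpillar n k f) (caterpillar n k (centered k))) :
    ∀ y ∈ Ico 1 n, muAbove n k (centered k) y = muAbove n k f y := by
  refine (sum_eq_sum_iff_of_le fun y hy => muAbove_centered_le hy).1 ?_
  rw [← sum_mul_r_caterpillar hf, ← sum_mul_r_caterpillar hf.centered]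
  exact sum_congr rfl fun i hi => by rw [hr i (mem_Icc.1 hi).1 (mem_Icc.1 hi).2]

theorem le_of_pendantsBelow_eq_zero {t : ℕ} (h : pendantsBelow n k f t = 0) :
    ∀ j, k ≤ j → j < n → t ≤ f j := by
  intro j hkj hjn
  have := card_filter_eq_zero_iff.1 h j (mem_Ico.2 ⟨hkj, hjn⟩)
  omega

theorem lt_of_pendantsBelow_eq {t : ℕ} (h : pendantsBelow n k f t = n - k) :
    ∀ j, k ≤ j → j < n → f j < t := by
  intro j hkj hjn
  rw [pendantsBelow, ← Nat.card_Ico k n] at h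
  exact card_filter_eq_iff.1 h j (mem_Ico.2 ⟨hkj, hjn⟩)

theorem pendantsBelow_dichotomy (hf : AttachesToSpine n k f) (hk : k ≤ n)
    (heq : ∀ y ∈ Ico 1 n, muAbove n k (centered k) y = muAbove n k f y) {t : ℕ} (ht : 1 ≤ t)
    (htk : t ≤ k) :
    pendantsBelow n k f t = 0 ∧ 2 * t ≤ k ∨
      pendantsBelow n k f t = n - k ∧ k ≤ 2 * t := by
  rcases htk.lt_or_eq with htk | rfl
  · have hmu := heq t (mem_Ico.2 ⟨ht, by omega⟩)
    have := pendantsBelow_le (n := n) (k := k) (f := f) t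
    simp only [muAbove, if_pos htk, pendantsBelow_centered] at hmu
    split_ifs at hmu <;> omega
  · right
    refine ⟨?_, by omega⟩
    rw [pendantsBelow, filter_true_of_mem fun j hj => hf j (mem_Ico.1 hj).1 (mem_Ico.1 hj).2,
      Nat.card_Ico]

theorem attachment_eq_of_muAbove_centered_eq (hf : AttachesToSpine n k f) (hk2 : 2 ≤ k)
    (hk : k ≤ n) (heq : ∀ y ∈ Ico 1 n, muAbove n k (centered k) y = muAbove n k f y) :
    (∀ j, k ≤ j → j < n → f j = (k + 1) / 2 - 1) ∨
      (k = 2 * ((k + 1) / 2) ∧ ∀ j, k ≤ j → j < n → f j = (k + 1) / 2) := by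
  set s := (k + 1) / 2 with hs
  have hlow : ∀ j, k ≤ j → j < n → s - 1 ≤ f j := by
    rcases Nat.lt_or_ge s 2 with h2 | h2
    · intro j _ _
      omega
    rcases pendantsBelow_dichotomy hf hk heq (t := s - 1) (by omega) (by omega)
      with ⟨hA, -⟩ | ⟨-, h⟩
    · exact le_of_pendantsBelow_eq_zero hA
    · omega
  rcases pendantsBelow_dichotomy hf hk heq (t := s) (by omega) (by omega)
    with ⟨hA, h⟩ | ⟨hA, -⟩
  · have hup := pendantsBelow_dichotomy hf hk heq (t := s + 1) (by omega) (by omega)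
    refine .inr ⟨by omega, fun j hkj hjn => ?_⟩
    have := le_of_pendantsBelow_eq_zero hA j hkj hjn
    rcases hup with ⟨-, h'⟩ | ⟨hA', -⟩
    · omega
    · have := lt_of_pendantsBelow_eq hA' j hkj hjn
      omega
  · exact .inl fun j hkj hjn => by
      have := lt_of_pendantsBelow_eq hA j hkj hjn
      have := hlow j hkj hjn
      omega

def spineReflect (k x : ℕ) : ℕ :=
  if x < k then k - 1 - x else x

theorem spineReflect_involutive (k : ℕ) : Function.Involutive (spineReflect k) := by
  intro x
  unfold spineReflect
  split_ifs <;> omega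

theorem spineReflect_lt (hk : k ≤ n) {x : ℕ} (hx : x < n) : spineReflect k x < n := by
  unfold spineReflect
  split_ifs <;> omega

def caterpillarReflect (hf : AttachesToSpine n k f) (hk : k ≤ n) :
    caterpillar n k f ≃g caterpillar n k fun j => k - 1 - f j where
  toFun x := ⟨spineReflect k x, spineReflect_lt hk x.isLt⟩
  invFun x := ⟨spineReflect k x, spineReflect_lt hk x.isLt⟩
  left_inv x := Fin.ext (spineReflect_involutive k x)
  right_inv x := Fin.ext (spineReflect_involutive k x)
  map_rel_iff' {x y} := by
    have hf' : AttachesToSpine n k fun j => k - 1 - f j := fun j hj hjn => by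
      show k - 1 - f j < k
      have := hf j hj hjn
      omega
    have hfx := (hf x · x.isLt)
    have hfy := (hf y · y.isLt)
    simp only [Equiv.coe_fn_mk, caterpillar_adj_iff hf, caterpillar_adj_iff hf', IsParent,
      spineReflect]
    split_ifs <;> omega

theorem nonempty_iso_centered_of_muAbove_eq (hf : AttachesToSpine n k f) (hk2 : 2 ≤ k)
    (hk : k ≤ n) (heq : ∀ y ∈ Ico 1 n, muAbove n k (centered k) y = muAbove n k f y) :
    Nonempty (caterpillar n k f ≃g caterpillar n k (centered k)) := by
  rcases attachment_eq_of_muAbove_centered_eq hf hk2 hk heq with h | ⟨hs, h⟩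
  · rw [caterpillar_congr h]
    exact ⟨.refl⟩
  · have hreflect : (caterpillar n k fun j => k - 1 - f j) = caterpillar n k (centered k) :=
      caterpillar_congr fun j hj hjn => by rw [h j hj hjn, centered]; omega
    rw [← hreflect]
    exact ⟨caterpillarReflect hf hk⟩

end Caterpillar

/-- Let `T = CP(n; n₁, …, n_k) ∈ C(n,k)` be a caterpillar tree with respect
to the path `P_k`, where `2 ≤ k ≤ n − 1`. Then `T ⪰ CP_{n,k}^{⌈k/2⌉}`, and
`r(T) = r(CP_{n,k}^{⌈k/2⌉})` iff `T` is isomorphic to `CP_{n,k}^{⌈k/2⌉}`. -/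
theorem stmt11 (n k : ℕ) (f : ℕ → ℕ) (hk2 : 2 ≤ k) (hkn : k ≤ n - 1)
    (hf : ∀ j, k ≤ j → j < n → f j < k) :
    Preceq n (cpOne n k ((k + 1) / 2)) (caterpillar n k f) ∧
    (SameEdgeDivision n (caterpillar n k f) (cpOne n k ((k + 1) / 2)) ↔
      Nonempty (caterpillar n k f ≃g cpOne n k ((k + 1) / 2))) := by
  have hk : k ≤ n := by omega
  rw [cpOne_eq_caterpillar]
  refine ⟨fun m _ _ => tailSum_centered_le hf m, ⟨fun hr => ?_, fun ⟨φ⟩ i _ _ => ?_⟩⟩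
  · exact nonempty_iso_centered_of_muAbove_eq hf hk2 hk
      (muAbove_centered_eq_of_sameEdgeDivision hf hr)
  · exact r_eq_of_iso φ i

end TreeOrder
end

section
/- Let T_1 and T_2 be trees of orders n_1 ≥ 2 and n_2 ≥ 2 respectively, let T be the tree obtained from T_1 and T_2 by adding an edge between a vertex u of T_1 and a vertex v of T_2, and let T' be the tree obtained from T by contracting the edge uv to the single vertex u and attaching a new pendent vertex v to u. Then T ≻ T'. -/
namespace TreeOrder

attribute [local instance] Classical.propDecidable

variable {V : Type*} {W : Type*}

/-!
Let `φ = collapse u v` fix every vertex except `v`, which it sends to `u`. The map `e ↦ φ e` is a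
bijection from the edges of `T` other than `uv` onto those of `T'` other than `uv`. Deleting `φ e`
from `T'` gives the transform of `T - e`, and the transformation does not change reachability, so
`φ e` splits `T'` exactly as `e` splits `T` and `μ` is preserved. Only `uv` changes:
`μ_T(uv) = min(n₁, n₂) ≥ 2`, whereas `v` is a leaf of `T'`, so `μ_{T'}(uv) = 1`. Hence
`Σ_{i ≥ k} r_i` drops by one for `2 ≤ k ≤ μ_T(uv)` and is unchanged otherwise.
-/

section EdgeMove

open SimpleGraph Finset

variable {G H : SimpleGraph V} {u v a b : V}

lemma _root_.SimpleGraph.Reachable.of_forall_adj_reachable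
    (hGH : ∀ ⦃x y⦄, G.Adj x y → H.Reachable x y) {x y : V} (h : G.Reachable x y) :
    H.Reachable x y := by
  obtain ⟨p⟩ := h
  induction p with
  | nil => rfl
  | cons hxz _ ih => exact (hGH hxz).trans ih

lemma _root_.SimpleGraph.Reachable.deleteEdges_or {a b w : V} (h : G.Reachable w a) :
    (G.deleteEdges {s(a, b)}).Reachable w a ∨ (G.deleteEdges {s(a, b)}).Reachable w b := by
  obtain ⟨p⟩ := h
  suffices ∀ {x c} (p : G.Walk x c), c = a →
      (G.deleteEdges {s(a, b)}).Reachable x a ∨ (G.deleteEdges {s(a, b)}).Reachable x b from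
    this p rfl
  intro x c p hc
  induction p with
  | nil => exact .inl (hc ▸ .rfl)
  | @cons x z _ hxz _ ih =>
    by_cases he : s(x, z) = s(a, b)
    · rcases Sym2.eq_iff.mp he with ⟨rfl, -⟩ | ⟨rfl, -⟩
      exacts [.inl .rfl, .inr .rfl]
    · have hxz' : (G.deleteEdges {s(a, b)}).Adj x z := by simp [hxz, he]
      exact (ih hc).imp hxz'.reachable.trans hxz'.reachable.trans

lemma _root_.SimpleGraph.Connected.dist_lt_dist_of_reachable_deleteEdges (hG : G.Connected)
    {a b w : V} (hab : G.IsBridge s(a, b)) (hw : (G.deleteEdges {s(a, b)}).Reachable w a) :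
    G.dist w a < G.dist w b := by
  obtain ⟨p, hp⟩ := hG.exists_walk_length_eq_dist w b
  have hmem : s(a, b) ∈ p.edges := by
    by_contra h
    exact isBridge_iff.mp hab (hw.symm.trans (reachable_deleteEdges_iff_exists_walk.mpr ⟨p, h⟩))
  have ha : a ∈ p.support := p.fst_mem_support_of_mem_edges hmem
  have hne : a ≠ b := by rintro rfl; exact isBridge_iff.mp hab .rfl
  calc G.dist w a ≤ (p.takeUntil a ha).length := dist_le _
    _ < p.length := Walk.length_takeUntil_lt_length ha hne
    _ = G.dist w b := hp

lemma _root_.SimpleGraph.IsTree.not_adj_of_adj_of_adj (hG : G.IsTree) {x y z : V}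
    (hxy : G.Adj x y) (hyz : G.Adj y z) : ¬G.Adj x z := by
  intro hxz
  have hbr := isAcyclic_iff_forall_adj_isBridge.mp hG.isAcyclic hxz
  have h1 : (G.deleteEdges {s(x, z)}).Adj x y := by simp [hxy, hyz.ne, hxy.ne']
  have h2 : (G.deleteEdges {s(x, z)}).Adj y z := by simp [hyz, hxy.ne', hyz.ne]
  exact isBridge_iff.mp hbr (h1.reachable.trans h2.reachable)

lemma side_eq_card_reachable [Fintype V] (hG : G.Connected) {a b : V}
    (hab : G.IsBridge s(a, b)) :
    side G a b = #{w | (G.deleteEdges {s(a, b)}).Reachable w a} := by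
  unfold side
  congr 1
  ext w
  simp only [mem_filter, mem_univ, true_and]
  refine ⟨fun hlt => ?_, hG.dist_lt_dist_of_reachable_deleteEdges hab⟩
  refine (hG w a).deleteEdges_or.resolve_right fun hwb => ?_
  rw [Sym2.eq_swap] at hab hwb
  exact (hG.dist_lt_dist_of_reachable_deleteEdges hab hwb).not_gt hlt

lemma side_add_side_le [Fintype V] (G : SimpleGraph V) (a b : V) :
    side G a b + side G b a ≤ Fintype.card V := by
  rw [side, side, ← card_union_of_disjoint (disjoint_filter.mpr fun _ _ h => h.not_gt)]
  exact card_le_univ _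

noncomputable def collapse (u v x : V) : V := if x = v then u else x

lemma edgeMove_adj_of_ne (hab : G.Adj a b) (ha : a ≠ v) (hb : b ≠ v) :
    (edgeMove G u v).Adj a b :=
  (fromRel_adj ..).mpr ⟨hab.ne, .inl (.inl ⟨hab, ha, hb⟩)⟩

lemma edgeMove_adj_of_adj_right (hvb : G.Adj v b) (hbu : b ≠ u) : (edgeMove G u v).Adj u b :=
  (fromRel_adj ..).mpr ⟨hbu.symm, .inl (.inr (.inr ⟨rfl, hvb, hbu⟩))⟩

lemma edgeMove_adj_of_adj (hab : G.Adj a b) (he : s(a, b) ≠ s(u, v)) :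
    (edgeMove G u v).Adj (collapse u v a) (collapse u v b) := by
  unfold collapse
  split_ifs with ha hb hb
  · exact absurd (ha.trans hb.symm) hab.ne
  · subst ha; exact edgeMove_adj_of_adj_right hab (by rintro rfl; exact he Sym2.eq_swap)
  · subst hb; exact (edgeMove_adj_of_adj_right hab.symm (by rintro rfl; exact he rfl)).symm
  · exact edgeMove_adj_of_ne hab ha hb

lemma edgeMove_deleteEdges (htri : ∀ w, G.Adj v w → ¬G.Adj u w) (hab : G.Adj a b) :
    (edgeMove G u v).deleteEdges {s(collapse u v a, collapse u v b)} =
      edgeMove (G.deleteEdges {s(a, b)}) u v := by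
  ext x y
  simp only [edgeMove, deleteEdges_adj, fromRel_adj, collapse, Sym2.eq_iff,
    Set.mem_singleton_iff]
  have := htri a
  have := htri b
  split_ifs <;> grind [SimpleGraph.Adj.symm, SimpleGraph.Adj.ne]

lemma edgeMove_adj_self (huv : u ≠ v) : (edgeMove G u v).Adj u v :=
  (fromRel_adj ..).mpr ⟨huv, .inl (.inr (.inl ⟨rfl, rfl⟩))⟩

lemma reachable_edgeMove_iff (huv : G.Adj u v) {x y : V} :
    (edgeMove G u v).Reachable x y ↔ G.Reachable x y := by
  constructor
  · refine Reachable.of_forall_adj_reachable fun x y h => ?_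
    rcases (fromRel_adj ..).mp h with
      ⟨-, (⟨h, -, -⟩ | ⟨rfl, rfl⟩ | ⟨rfl, h, -⟩) | (⟨h, -, -⟩ | ⟨rfl, rfl⟩ | ⟨rfl, h, -⟩)⟩
    exacts [h.reachable, huv.reachable, huv.reachable.trans h.reachable, h.reachable.symm,
      huv.reachable.symm, (huv.reachable.trans h.reachable).symm]
  · have hv : ∀ {z}, G.Adj v z → (edgeMove G u v).Reachable v z := fun {z} hvz => by
      have hvu : (edgeMove G u v).Reachable v u := (edgeMove_adj_self huv.ne).reachable.symm
      by_cases hzu : z = u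
      · exact hzu ▸ hvu
      · exact hvu.trans (edgeMove_adj_of_adj_right hvz hzu).reachable
    refine Reachable.of_forall_adj_reachable fun x y h => ?_
    by_cases hx : x = v
    · exact hx ▸ hv (hx ▸ h)
    by_cases hy : y = v
    · rw [hy] at h ⊢
      exact (hv h.symm).symm
    exact (edgeMove_adj_of_ne h hx hy).reachable

lemma connected_edgeMove (hG : G.Connected) (huv : G.Adj u v) : (edgeMove G u v).Connected :=
  haveI := hG.nonempty
  ⟨fun x y => (reachable_edgeMove_iff huv).mpr (hG x y)⟩

lemma side_edgeMove_collapse [Fintype V] (hT : G.IsTree) (huv : G.Adj u v) (hab : G.Adj a b)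
    (he : s(a, b) ≠ s(u, v)) :
    side (edgeMove G u v) (collapse u v a) (collapse u v b) = side G a b := by
  have huv' : (G.deleteEdges {s(a, b)}).Adj u v := by simp [huv, Ne.symm he]
  have hreach : ∀ x y,
      ((edgeMove G u v).deleteEdges {s(collapse u v a, collapse u v b)}).Reachable x y ↔
        (G.deleteEdges {s(a, b)}).Reachable x y := by
    intro x y
    rw [edgeMove_deleteEdges (fun w hvw => hT.not_adj_of_adj_of_adj huv hvw) hab]
    exact reachable_edgeMove_iff huv'
  have hcollapse : ∀ x, (G.deleteEdges {s(a, b)}).Reachable x (collapse u v x) := by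
    intro x
    unfold collapse
    split_ifs with hx
    exacts [hx ▸ huv'.reachable.symm, .rfl]
  have hbr : G.IsBridge s(a, b) := isAcyclic_iff_forall_adj_isBridge.mp hT.isAcyclic hab
  have hbr' : (edgeMove G u v).IsBridge s(collapse u v a, collapse u v b) := by
    rw [isBridge_iff, hreach]
    exact fun h => isBridge_iff.mp hbr ((hcollapse a).trans (h.trans (hcollapse b).symm))
  rw [side_eq_card_reachable (connected_edgeMove hT.connected huv) hbr',
    side_eq_card_reachable hT.connected hbr]
  congr 1
  ext w
  simp only [mem_filter, mem_univ, true_and, hreach]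
  exact ⟨fun h => h.trans (hcollapse a).symm, fun h => h.trans (hcollapse a)⟩

lemma mu_edgeMove_collapse [Fintype V] (hT : G.IsTree) (huv : G.Adj u v) (hab : G.Adj a b)
    (he : s(a, b) ≠ s(u, v)) :
    mu (edgeMove G u v) (collapse u v a) (collapse u v b) = mu G a b := by
  rw [mu, mu, side_edgeMove_collapse hT huv hab he,
    side_edgeMove_collapse hT huv hab.symm (by rwa [Sym2.eq_swap])]

lemma side_eq_one_of_forall_adj_eq [Fintype V] (hG : G.Connected) (huv : u ≠ v)
    (hv : ∀ x, G.Adj v x → x = u) : side G v u = 1 := by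
  have hleaf : ∀ w, (G.deleteEdges {s(v, u)}).Reachable w v ↔ w = v := by
    refine fun w => ⟨fun h => ?_, fun h => h ▸ .rfl⟩
    obtain ⟨p⟩ := h.symm
    cases p with
    | nil => rfl
    | cons hadj _ =>
      obtain ⟨hadj, hne⟩ := deleteEdges_adj.mp hadj
      exact (hne (hv _ hadj ▸ rfl)).elim
  have hbr : G.IsBridge s(v, u) := isBridge_iff.mpr fun h => huv ((hleaf u).mp h.symm)
  rw [side_eq_card_reachable hG hbr, card_eq_one]
  exact ⟨v, by ext; simp [hleaf]⟩

lemma mu_edgeMove_self [Fintype V] (hG : G.Connected) (huv : G.Adj u v) :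
    mu (edgeMove G u v) u v = 1 := by
  have hG' := connected_edgeMove hG huv
  have hv : side (edgeMove G u v) v u = 1 := by
    refine side_eq_one_of_forall_adj_eq hG' huv.ne fun x hx => ?_
    simp only [edgeMove, fromRel_adj] at hx
    grind [SimpleGraph.Adj.ne]
  have hu : 0 < side (edgeMove G u v) u v :=
    card_pos.mpr ⟨u, by simp [hG'.pos_dist_of_ne huv.ne]⟩
  rw [mu, hv]
  omega

lemma collapse_ne (huv : u ≠ v) (x : V) : collapse u v x ≠ v := by
  unfold collapse
  split_ifs with hx
  exacts [huv, hx]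

lemma map_collapse_mem_edgeSet {e : Sym2 V} (he : e ∈ G.edgeSet) (hne : e ≠ s(u, v)) :
    e.map (collapse u v) ∈ (edgeMove G u v).edgeSet := by
  induction e using Sym2.ind with
  | _ a b => exact edgeMove_adj_of_adj he hne

lemma map_collapse_ne (huv : u ≠ v) (e : Sym2 V) : e.map (collapse u v) ≠ s(u, v) := by
  induction e using Sym2.ind with
  | _ a b =>
    rw [Sym2.map_mk, Ne, Sym2.eq_iff]
    exact fun h => h.elim (fun h => collapse_ne huv b h.2) (fun h => collapse_ne huv a h.1)

lemma injOn_map_collapse (htri : ∀ w, G.Adj v w → ¬G.Adj u w) :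
    Set.InjOn (Sym2.map (collapse u v)) (G.edgeSet \ {s(u, v)}) := by
  rintro e₁ ⟨he₁, hne₁⟩ e₂ ⟨he₂, hne₂⟩ heq
  induction e₁ using Sym2.ind with | _ a b =>
  induction e₂ using Sym2.ind with | _ c d =>
  simp only [mem_edgeSet, Set.mem_singleton_iff, Sym2.map_mk, Sym2.eq_iff,
    collapse] at *
  have := htri a
  have := htri b
  have := htri c
  have := htri d
  split_ifs at heq <;> grind [SimpleGraph.Adj.symm, SimpleGraph.Adj.ne]

lemma exists_map_collapse_eq {e : Sym2 V} (he : e ∈ (edgeMove G u v).edgeSet)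
    (hne : e ≠ s(u, v)) : ∃ e₀ ∈ G.edgeSet \ {s(u, v)}, e₀.map (collapse u v) = e := by
  induction e using Sym2.ind with | _ x y =>
  rcases (fromRel_adj ..).mp (mem_edgeSet _ |>.mp he) with
    ⟨-, (⟨h, hx, hy⟩ | ⟨rfl, rfl⟩ | ⟨rfl, h, hy⟩) | (⟨h, hy, hx⟩ | ⟨rfl, rfl⟩ | ⟨rfl, h, hx⟩)⟩
  · exact ⟨s(x, y), ⟨h, by simp [hx, hy]⟩, by simp [collapse, hx, hy]⟩
  · exact absurd rfl hne
  · exact ⟨s(v, y), ⟨h, by simp [h.ne', hy]⟩, by simp [collapse, h.ne']⟩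
  · exact ⟨s(x, y), ⟨h.symm, by simp [hx, hy]⟩, by simp [collapse, hx, hy]⟩
  · exact absurd Sym2.eq_swap hne
  · exact ⟨s(x, v), ⟨h.symm, by simp [h.ne', hx]⟩, by simp [collapse, h.ne']⟩

lemma muE_edgeMove_map_collapse [Fintype V] (hT : G.IsTree) (huv : G.Adj u v) {e : Sym2 V}
    (he : e ∈ G.edgeSet \ {s(u, v)}) :
    muE (edgeMove G u v) (e.map (collapse u v)) = muE G e := by
  induction e using Sym2.ind with
  | _ a b => exact mu_edgeMove_collapse hT huv he.1 he.2

noncomputable def edgesWithMu [Fintype V] (G : SimpleGraph V) (i : ℕ) : Finset (Sym2 V) :=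
  {e | e ∈ G.edgeSet ∧ muE G e = i}

lemma r_eq_card_edgesWithMu [Fintype V] (G : SimpleGraph V) (i : ℕ) :
    r G i = #(edgesWithMu G i) := rfl

lemma card_erase_edgesWithMu_edgeMove [Fintype V] (hT : G.IsTree) (huv : G.Adj u v) (i : ℕ) :
    #((edgesWithMu (edgeMove G u v) i).erase s(u, v)) = #((edgesWithMu G i).erase s(u, v)) := by
  have hmem : ∀ {H : SimpleGraph V} {e}, e ∈ (edgesWithMu H i).erase s(u, v) ↔
      e ∈ H.edgeSet \ {s(u, v)} ∧ muE H e = i := by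
    simp [edgesWithMu, and_assoc, and_comm (a := _ ≠ _)]
  symm
  refine card_bij (fun e _ => e.map (collapse u v)) (fun e he => ?_)
    (fun e₁ he₁ e₂ he₂ => injOn_map_collapse (fun w hvw => hT.not_adj_of_adj_of_adj huv hvw)
      (hmem.mp he₁).1 (hmem.mp he₂).1) (fun e he => ?_)
  · obtain ⟨he, hμ⟩ := hmem.mp he
    exact hmem.mpr ⟨⟨map_collapse_mem_edgeSet he.1 he.2, map_collapse_ne huv.ne e⟩,
      (muE_edgeMove_map_collapse hT huv he).trans hμ⟩
  · obtain ⟨he, hμ⟩ := hmem.mp he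
    obtain ⟨e₀, he₀, rfl⟩ := exists_map_collapse_eq he.1 he.2
    exact ⟨e₀, hmem.mpr ⟨he₀, (muE_edgeMove_map_collapse hT huv he₀).symm.trans hμ⟩, rfl⟩

lemma _root_.Finset.card_add_ite_mem_eq_of_card_erase_eq {α : Type*} [DecidableEq α]
    {s t : Finset α} {a : α} (h : #(s.erase a) = #(t.erase a)) :
    #s + (if a ∈ t then 1 else 0) = #t + (if a ∈ s then 1 else 0) := by
  rw [card_erase_eq_ite, card_erase_eq_ite] at h
  by_cases hs : a ∈ s <;> by_cases ht : a ∈ t <;>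
    simp only [hs, ht, if_true, if_false] at h ⊢ <;> grind [card_pos]

lemma r_edgeMove_add_ite [Fintype V] (hT : G.IsTree) (huv : G.Adj u v) (i : ℕ) :
    r (edgeMove G u v) i + (if i = mu G u v then 1 else 0) =
      r G i + (if i = 1 then 1 else 0) := by
  have hG : s(u, v) ∈ edgesWithMu G i ↔ i = mu G u v := by
    simp [edgesWithMu, huv, muE, eq_comm]
  have hG' : s(u, v) ∈ edgesWithMu (edgeMove G u v) i ↔ i = 1 := by
    simp [edgesWithMu, muE, mu_edgeMove_self hT.connected huv, eq_comm,
      edgeMove_adj_self (G := G) huv.ne]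
  simpa only [r_eq_card_edgesWithMu, hG, hG'] using
    card_add_ite_mem_eq_of_card_erase_eq (card_erase_edgesWithMu_edgeMove hT huv i)

lemma tailSum_edgeMove_add_ite [Fintype V] (hT : G.IsTree) (huv : G.Adj u v) (n k : ℕ) :
    tailSum (edgeMove G u v) n k + (if mu G u v ∈ Icc k (n / 2) then 1 else 0) =
      tailSum G n k + (if 1 ∈ Icc k (n / 2) then 1 else 0) := by
  have := sum_congr rfl fun i (_ : i ∈ Icc k (n / 2)) => r_edgeMove_add_ite hT huv i
  simpa only [tailSum, sum_add_distrib, sum_ite_eq'] using this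

end EdgeMove

/-- Let `T₁, T₂` be trees of orders `n₁ ≥ 2`, `n₂ ≥ 2`, let `T` be the tree
obtained by joining a vertex `u` of `T₁` and a vertex `v` of `T₂` by an edge (so `T` is a
tree in which `uv` is an edge whose two components after deletion have orders `≥ 2`), and
let `T'` be obtained from `T` by contracting `uv` to `u` and attaching a pendent vertex `v`
to `u`. Then `T ≻ T'`. -/
theorem stmt12 {V : Type*} [Fintype V] (G : SimpleGraph V) (hT : G.IsTree) (u v : V)
    (huv : G.Adj u v) (h1 : 2 ≤ side G u v) (h2 : 2 ≤ side G v u) :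
    Prec (Fintype.card V) (edgeMove G u v) G := by
  have hsides := side_add_side_le G u v
  have hμ : 2 ≤ mu G u v ∧ 2 * mu G u v ≤ Fintype.card V := by
    unfold mu
    omega
  have key (k : ℕ) := tailSum_edgeMove_add_ite hT huv (Fintype.card V) k
  simp only [Finset.mem_Icc] at key
  refine ⟨fun k hk1 hk2 => ?_, 2, by omega, by omega, ?_⟩
  · have := key k
    split_ifs at this <;> omega
  · have := key 2
    split_ifs at this <;> omega

end TreeOrder
end
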